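/- Let η_1 ∈ (0, 1), let {x_n} ⊆ A, let {c_n} ⊂ (0, +∞), and for each n let V_n be a subgradient tuple at x_n. Suppose that for every n: x_{n+1} is a global minimiser of Q_{c_{n+1}}(·, x_n, V_n) over A; the function Γ(·, x_n, V_n) attains a global minimum over A, with minimal value Γ̂_n; and at least one of the following holds: (a) Γ(x_{n+1}, x_n, V_n) = 0, (b) Γ̂_n = φ(x_n) (i.e. x_n minimises Γ(·, x_n, V_n) over A), (c) Γ(x_{n+1}, x_n, V_n) − φ(x_n) ≤ η_1 (Γ̂_n − φ(x_n)). If the sequence {x_n} converges to a point x*, then x* is either feasible for (P) or an infeasible critical point of the penalty term φ. -/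

import Mathlib

open RealInnerProductSpace Finset Filter Topology

noncomputable section

/-- Euclidean space `ℝ^d`. -/
abbrev Euc (d : ℕ) := EuclideanSpace ℝ (Fin d)

/-- The (convex-analysis) subdifferential of `f` at `y`. -/
def subdiff {d : ℕ} (f : Euc d → ℝ) (y : Euc d) : Set (Euc d) :=
  {v | ∀ x, f y + ⟪v, x - y⟫ ≤ f x}

/-- The normal cone to `A` at `x`. -/
def normalCone {d : ℕ} (A : Set (Euc d)) (x : Euc d) : Set (Euc d) :=
  {v | ∀ y ∈ A, ⟪v, y - x⟫ ≤ 0}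

/-- A subgradient tuple `V = (v₀, vᵢ (i ∈ I), vⱼ, wⱼ (j ∈ E))` at the point `y`:
`v_k ∈ ∂h_k(y)` for `k ∈ {0} ∪ I ∪ E` and `w_j ∈ ∂g_j(y)` for `j ∈ E`. -/
structure SubgradTuple {d l p : ℕ} (h0 : Euc d → ℝ) (hI : Fin l → Euc d → ℝ)
    (gE hE : Fin p → Euc d → ℝ) (y : Euc d) : Type where
  v0 : Euc d
  vI : Fin l → Euc d
  vE : Fin p → Euc d
  wE : Fin p → Euc d
  v0_mem : v0 ∈ subdiff h0 y
  vI_mem : ∀ i, vI i ∈ subdiff (hI i) y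
  vE_mem : ∀ j, vE j ∈ subdiff (hE j) y
  wE_mem : ∀ j, wE j ∈ subdiff (gE j) y

variable {d l p : ℕ}

/-- The linearised infeasibility measure `Γ(x, y, V)`. -/
def Gam (gI : Fin l → Euc d → ℝ) {h0 : Euc d → ℝ} {hI : Fin l → Euc d → ℝ}
    {gE hE : Fin p → Euc d → ℝ} {y : Euc d}
    (V : SubgradTuple h0 hI gE hE y) (x : Euc d) : ℝ :=
  (∑ i, max (gI i x - hI i y - ⟪V.vI i, x - y⟫) 0)
  + ∑ j, max (gE j x - hE j y - ⟪V.vE j, x - y⟫)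
      (hE j x - gE j y - ⟪V.wE j, x - y⟫)

/-- The convex majorant `Q_c(x, y, V)` of the penalty function. -/
def Qfun (g0 : Euc d → ℝ) (gI : Fin l → Euc d → ℝ) {h0 : Euc d → ℝ}
    {hI : Fin l → Euc d → ℝ} {gE hE : Fin p → Euc d → ℝ} {y : Euc d}
    (V : SubgradTuple h0 hI gE hE y) (c : ℝ) (x : Euc d) : ℝ :=
  g0 x - ⟪V.v0, x - y⟫ + c * Gam gI V x

/-- The ℓ1 penalty term `φ`. -/
def phi (gI hI : Fin l → Euc d → ℝ) (gE hE : Fin p → Euc d → ℝ) (x : Euc d) : ℝ :=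
  (∑ i, max (gI i x - hI i x) 0) + ∑ j, |gE j x - hE j x|

/-- The ℓ1 penalty function `Φ_c = f₀ + c φ`. -/
def Phi (g0 h0 : Euc d → ℝ) (gI hI : Fin l → Euc d → ℝ) (gE hE : Fin p → Euc d → ℝ)
    (c : ℝ) (x : Euc d) : ℝ :=
  (g0 x - h0 x) + c * phi gI hI gE hE x

/-- Feasibility for the problem (P). -/
def Feasible (A : Set (Euc d)) (gI hI : Fin l → Euc d → ℝ)
    (gE hE : Fin p → Euc d → ℝ) (x : Euc d) : Prop :=
  x ∈ A ∧ (∀ i, gI i x - hI i x ≤ 0) ∧ (∀ j, gE j x - hE j x = 0)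

/-- Criticality for the problem (P) (Definition 1). -/
def IsCritical (A : Set (Euc d)) (g0 h0 : Euc d → ℝ) (gI hI : Fin l → Euc d → ℝ)
    (gE hE : Fin p → Euc d → ℝ) (x : Euc d) : Prop :=
  ∃ V : SubgradTuple h0 hI gE hE x, ∃ lam : Fin l → ℝ, ∃ mu1 mu2 : Fin p → ℝ,
    (∀ i, 0 ≤ lam i) ∧ (∀ j, 0 ≤ mu1 j) ∧ (∀ j, 0 ≤ mu2 j) ∧
    (∀ i, lam i * (gI i x - hI i x) = 0) ∧
    ∃ u0 ∈ subdiff g0 x, ∃ uI : Fin l → Euc d, (∀ i, uI i ∈ subdiff (gI i) x) ∧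
    ∃ uE : Fin p → Euc d, (∀ j, uE j ∈ subdiff (gE j) x) ∧
    ∃ zE : Fin p → Euc d, (∀ j, zE j ∈ subdiff (hE j) x) ∧
    ∃ ν ∈ normalCone A x,
      (0 : Euc d) = (u0 - V.v0) + (∑ i, lam i • (uI i - V.vI i))
        + (∑ j, mu1 j • (uE j - V.vE j)) - (∑ j, mu2 j • (V.wE j - zE j)) + ν

/-- Generalised criticality for the penalty parameter `c`. -/
def IsGenCritical (A : Set (Euc d)) (g0 h0 : Euc d → ℝ) (gI hI : Fin l → Euc d → ℝ)
    (gE hE : Fin p → Euc d → ℝ) (c : ℝ) (x : Euc d) : Prop :=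
  x ∈ A ∧ ∃ V : SubgradTuple h0 hI gE hE x, ∀ z ∈ A, Qfun g0 gI V c x ≤ Qfun g0 gI V c z

/-- Criticality for the penalty term `φ`. -/
def IsCriticalPen (A : Set (Euc d)) (h0 : Euc d → ℝ) (gI hI : Fin l → Euc d → ℝ)
    (gE hE : Fin p → Euc d → ℝ) (x : Euc d) : Prop :=
  x ∈ A ∧ ∃ V : SubgradTuple h0 hI gE hE x, ∀ z ∈ A, Gam gI V x ≤ Gam gI V z

/-- `F` is coercive on `A`. -/
def CoerciveOn {d : ℕ} (F : Euc d → ℝ) (A : Set (Euc d)) : Prop :=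
  ∀ u : ℕ → Euc d, (∀ n, u n ∈ A) → Tendsto (fun n => ‖u n‖) atTop atTop →
    Tendsto (fun n => F (u n)) atTop atTop

/-!
Along the sequence, `Γ̂_n ≤ Γ(x_n, x_n, V_n) = φ(x_n) ≤ Γ(x_{n+1}, x_n, V_n)`, the last step because
the linearisations minorise each `g_k - h_k`. If `x*` is infeasible then `φ(x*) > 0`, so case (a)
fails eventually, and in either remaining case `Γ̂_n → φ(x*)` along a subsequence: trivially under
(b), and under (c) because `φ(x_{n+1}) - φ(x_n) ≤ η₁ (Γ̂_n - φ(x_n)) ≤ 0` squeezes the gap.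
Subgradients of continuous convex functions are locally bounded and have closed graph, so a further
subsequence of `V_n` converges to a subgradient tuple `V*` at `x*`; passing to the limit in
`Γ̂_n ≤ Γ(z, x_n, V_n)` gives `Γ(x*, x*, V*) = φ(x*) ≤ Γ(z, x*, V*)` for every `z ∈ A`.
-/

lemma phi_nonneg (gI hI : Fin l → Euc d → ℝ) (gE hE : Fin p → Euc d → ℝ) (x : Euc d) :
    0 ≤ phi gI hI gE hE x :=
  add_nonneg (sum_nonneg fun _ _ => le_max_right _ _) (sum_nonneg fun _ _ => abs_nonneg _)

lemma feasible_of_phi_eq_zero {A : Set (Euc d)} {gI hI : Fin l → Euc d → ℝ}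
    {gE hE : Fin p → Euc d → ℝ} {x : Euc d} (hxA : x ∈ A) (h : phi gI hI gE hE x = 0) :
    Feasible A gI hI gE hE x := by
  obtain ⟨hIneq, hEq⟩ := (add_eq_zero_iff_of_nonneg (sum_nonneg fun _ _ => le_max_right _ _)
    (sum_nonneg fun _ _ => abs_nonneg _)).1 h
  refine ⟨hxA, fun i => ?_, fun j => ?_⟩
  · exact max_eq_right_iff.1 <|
      (sum_eq_zero_iff_of_nonneg fun _ _ => le_max_right _ _).1 hIneq i (mem_univ i)
  · exact abs_eq_zero.1 <| (sum_eq_zero_iff_of_nonneg fun _ _ => abs_nonneg _).1 hEq j (mem_univ j)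

lemma continuous_phi {gI hI : Fin l → Euc d → ℝ} {gE hE : Fin p → Euc d → ℝ}
    (hgI : ∀ i, Continuous (gI i)) (hhI : ∀ i, Continuous (hI i))
    (hgE : ∀ j, Continuous (gE j)) (hhE : ∀ j, Continuous (hE j)) :
    Continuous (phi gI hI gE hE) :=
  (continuous_finsetSum _ fun i _ => ((hgI i).sub (hhI i)).max continuous_const).add
    (continuous_finsetSum _ fun j _ => ((hgE j).sub (hhE j)).abs)

section Gam

variable (gI : Fin l → Euc d → ℝ) {h0 : Euc d → ℝ} {hI : Fin l → Euc d → ℝ}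
  {gE hE : Fin p → Euc d → ℝ}

lemma phi_le_Gam {y : Euc d} (V : SubgradTuple h0 hI gE hE y) (x : Euc d) :
    phi gI hI gE hE x ≤ Gam gI V x := by
  refine add_le_add (sum_le_sum fun i _ => max_le_max_right _ ?_)
    (sum_le_sum fun j _ => (abs_eq_max_neg).trans_le (max_le_max ?_ ?_))
  · linarith [V.vI_mem i x]
  · linarith [V.vE_mem j x]
  · linarith [V.wE_mem j x]

lemma Gam_self {y : Euc d} (V : SubgradTuple h0 hI gE hE y) :
    Gam gI V y = phi gI hI gE hE y := by
  simp only [Gam, phi, sub_self, inner_zero_right, sub_zero, abs_eq_max_neg, neg_sub]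

lemma tendsto_Gam (hhI : ∀ i, Continuous (hI i)) (hgE : ∀ j, Continuous (gE j))
    (hhE : ∀ j, Continuous (hE j)) {y : ℕ → Euc d} {y₀ : Euc d} (hy : Tendsto y atTop (𝓝 y₀))
    (W : (n : ℕ) → SubgradTuple h0 hI gE hE (y n)) (W₀ : SubgradTuple h0 hI gE hE y₀)
    (hvI : Tendsto (fun n => (W n).vI) atTop (𝓝 W₀.vI))
    (hvE : Tendsto (fun n => (W n).vE) atTop (𝓝 W₀.vE))
    (hwE : Tendsto (fun n => (W n).wE) atTop (𝓝 W₀.wE)) (z : Euc d) :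
    Tendsto (fun n => Gam gI (W n) z) atTop (𝓝 (Gam gI W₀ z)) := by
  have affine {F : Euc d → ℝ} (hF : Continuous F) {u : ℕ → Euc d} {u₀ : Euc d}
      (hu : Tendsto u atTop (𝓝 u₀)) (a : ℝ) :
      Tendsto (fun n => a - F (y n) - ⟪u n, z - y n⟫) atTop (𝓝 (a - F y₀ - ⟪u₀, z - y₀⟫)) :=
    (tendsto_const_nhds.sub ((hF.tendsto y₀).comp hy)).sub
      (hu.inner (tendsto_const_nhds.sub hy))
  exact (tendsto_finsetSum _ fun i _ =>
      (affine (hhI i) (tendsto_pi_nhds.1 hvI i) _).max tendsto_const_nhds).add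
    (tendsto_finsetSum _ fun j _ =>
      (affine (hhE j) (tendsto_pi_nhds.1 hvE j) _).max
        (affine (hgE j) (tendsto_pi_nhds.1 hwE j) _))

end Gam

section Subdifferential

variable {h : Euc d → ℝ}

lemma mem_subdiff_of_tendsto (hh : Continuous h) {y v : ℕ → Euc d} {y₀ v₀ : Euc d}
    (hy : Tendsto y atTop (𝓝 y₀)) (hv : Tendsto v atTop (𝓝 v₀))
    (hmem : ∀ n, v n ∈ subdiff h (y n)) : v₀ ∈ subdiff h y₀ := fun z =>
  le_of_tendsto (((hh.tendsto y₀).comp hy).add (hv.inner (tendsto_const_nhds.sub hy)))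
    (Eventually.of_forall fun n => hmem n z)

lemma norm_le_of_mem_subdiff {y v : Euc d} {M : ℝ} (hv : v ∈ subdiff h y)
    (hM : ∀ z ∈ Metric.closedBall y 1, |h z| ≤ M) : ‖v‖ ≤ 2 * M := by
  set e : Euc d := ‖v‖⁻¹ • v
  have he : e ∈ Metric.closedBall (0 : Euc d) 1 := by
    rw [mem_closedBall_zero_iff, norm_smul, norm_inv, norm_norm]
    exact inv_mul_le_one
  have hinner : ⟪v, e⟫ = ‖v‖ := by
    rw [real_inner_smul_right, real_inner_self_eq_norm_sq, sq, ← mul_assoc, inv_mul_mul_self]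
  have hstep := hv (y + e)
  rw [add_sub_cancel_left, hinner] at hstep
  have hye : y + e ∈ Metric.closedBall y 1 := by
    simpa [dist_eq_norm] using he
  linarith [abs_le.1 (hM _ hye), abs_le.1 (hM y (Metric.mem_closedBall_self zero_le_one))]

lemma exists_norm_le_of_mem_subdiff (hh : Continuous h) {S : Set (Euc d)}
    (hS : Bornology.IsBounded S) : ∃ C, ∀ y ∈ S, ∀ v ∈ subdiff h y, ‖v‖ ≤ C := by
  obtain ⟨R, hR⟩ := hS.subset_closedBall 0
  obtain ⟨M, hM⟩ := (isCompact_closedBall (0 : Euc d) (R + 1)).exists_bound_of_continuousOn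
    hh.continuousOn
  refine ⟨2 * M, fun y hy v hv => norm_le_of_mem_subdiff hv fun z hz => ?_⟩
  refine (Real.norm_eq_abs _).symm.trans_le (hM z ?_)
  exact Metric.closedBall_subset_closedBall' (by linarith [Metric.mem_closedBall.1 (hR hy)]) hz

end Subdifferential

lemma SubgradTuple.exists_subseq_tendsto {h0 : Euc d → ℝ} {hI : Fin l → Euc d → ℝ}
    {gE hE : Fin p → Euc d → ℝ} (hh0 : Continuous h0) (hhI : ∀ i, Continuous (hI i))
    (hgE : ∀ j, Continuous (gE j)) (hhE : ∀ j, Continuous (hE j)) {y : ℕ → Euc d} {y₀ : Euc d}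
    (hy : Tendsto y atTop (𝓝 y₀)) (W : (n : ℕ) → SubgradTuple h0 hI gE hE (y n)) :
    ∃ (W₀ : SubgradTuple h0 hI gE hE y₀) (ρ : ℕ → ℕ), StrictMono ρ ∧
      Tendsto (fun k => (W (ρ k)).vI) atTop (𝓝 W₀.vI) ∧
      Tendsto (fun k => (W (ρ k)).vE) atTop (𝓝 W₀.vE) ∧
      Tendsto (fun k => (W (ρ k)).wE) atTop (𝓝 W₀.wE) := by
  have hS := hy.cauchySeq.isBounded_range
  obtain ⟨C₀, hC₀⟩ := exists_norm_le_of_mem_subdiff hh0 hS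
  choose CI hCI using fun i => exists_norm_le_of_mem_subdiff (hhI i) hS
  choose CE hCE using fun j => exists_norm_le_of_mem_subdiff (hhE j) hS
  choose CW hCW using fun j => exists_norm_le_of_mem_subdiff (hgE j) hS
  have hK : IsCompact (Metric.closedBall (0 : Euc d) C₀ ×ˢ
      (Set.univ.pi fun i => Metric.closedBall (0 : Euc d) (CI i)) ×ˢ
      (Set.univ.pi fun j => Metric.closedBall (0 : Euc d) (CE j)) ×ˢ
      (Set.univ.pi fun j => Metric.closedBall (0 : Euc d) (CW j))) :=
    (isCompact_closedBall _ _).prod <|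
      (isCompact_univ_pi fun _ => isCompact_closedBall _ _).prod <|
        (isCompact_univ_pi fun _ => isCompact_closedBall _ _).prod
          (isCompact_univ_pi fun _ => isCompact_closedBall _ _)
  have hmem (n : ℕ) := Set.mem_range_self (f := y) n
  obtain ⟨L, -, ρ, hρ, hL⟩ :=
    hK.tendsto_subseq (x := fun n => ((W n).v0, (W n).vI, (W n).vE, (W n).wE)) fun n =>
      ⟨mem_closedBall_zero_iff.2 (hC₀ _ (hmem n) _ (W n).v0_mem),
        fun i _ => mem_closedBall_zero_iff.2 (hCI i _ (hmem n) _ ((W n).vI_mem i)),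
        fun j _ => mem_closedBall_zero_iff.2 (hCE j _ (hmem n) _ ((W n).vE_mem j)),
        fun j _ => mem_closedBall_zero_iff.2 (hCW j _ (hmem n) _ ((W n).wE_mem j))⟩
  have hyρ := hy.comp hρ.tendsto_atTop
  have hvI := hL.snd_nhds.fst_nhds
  have hvE := hL.snd_nhds.snd_nhds.fst_nhds
  have hwE := hL.snd_nhds.snd_nhds.snd_nhds
  refine ⟨⟨L.1, L.2.1, L.2.2.1, L.2.2.2,
    mem_subdiff_of_tendsto hh0 hyρ hL.fst_nhds fun k => (W (ρ k)).v0_mem,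
    fun i => mem_subdiff_of_tendsto (hhI i) hyρ (tendsto_pi_nhds.1 hvI i) fun k =>
      (W (ρ k)).vI_mem i,
    fun j => mem_subdiff_of_tendsto (hhE j) hyρ (tendsto_pi_nhds.1 hvE j) fun k =>
      (W (ρ k)).vE_mem j,
    fun j => mem_subdiff_of_tendsto (hgE j) hyρ (tendsto_pi_nhds.1 hwE j) fun k =>
      (W (ρ k)).wE_mem j⟩,
    ρ, hρ, hvI, hvE, hwE⟩

lemma tendsto_of_sufficient_decrease {a b : ℕ → ℝ} {α η : ℝ} (hη : 0 < η)
    (ha : Tendsto a atTop (𝓝 α)) (hba : ∀ n, b n ≤ a n)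
    (hdec : ∀ᶠ n in atTop, a (n + 1) - a n ≤ η * (b n - a n)) :
    Tendsto b atTop (𝓝 α) := by
  have hstep : Tendsto (fun n => (a (n + 1) - a n) / η) atTop (𝓝 0) := by
    simpa using ((ha.comp (tendsto_add_atTop_nat 1)).sub ha).div_const η
  have hgap : Tendsto (fun n => b n - a n) atTop (𝓝 0) :=
    tendsto_of_tendsto_of_tendsto_of_le_of_le' hstep tendsto_const_nhds
      (hdec.mono fun n hn => (div_le_iff₀' hη).2 hn)
      (Eventually.of_forall fun n => sub_nonpos.2 (hba n))
  simpa using ha.add hgap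

/-- The three alternatives (a), (b), (c) of the step acceptance test, for `a n = φ(x_n)`,
`b n = Γ̂_n` and `γ n = Γ(x_{n+1}, x_n, V_n)`. -/
lemma exists_subseq_tendsto_of_alternatives {a b γ : ℕ → ℝ} {α η : ℝ} (hη : 0 < η) (hα : 0 < α)
    (ha : Tendsto a atTop (𝓝 α)) (hba : ∀ n, b n ≤ a n) (haγ : ∀ n, a (n + 1) ≤ γ n)
    (halt : ∀ n, γ n = 0 ∨ b n = a n ∨ γ n - a n ≤ η * (b n - a n)) :
    ∃ ψ : ℕ → ℕ, StrictMono ψ ∧ Tendsto (b ∘ ψ) atTop (𝓝 α) := by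
  have hγ : ∀ᶠ n in atTop, γ n ≠ 0 :=
    ((ha.comp (tendsto_add_atTop_nat 1)).eventually (lt_mem_nhds hα)).mono fun n hn =>
      (hn.trans_le (haγ n)).ne'
  by_cases hb : ∃ᶠ n in atTop, b n = a n
  · obtain ⟨ψ, hψ, hψb⟩ := extraction_of_frequently_atTop hb
    refine ⟨ψ, hψ, ?_⟩
    rw [show b ∘ ψ = a ∘ ψ from funext hψb]
    exact ha.comp hψ.tendsto_atTop
  · refine ⟨id, strictMono_id, tendsto_of_sufficient_decrease (b := b) hη ha hba ?_⟩
    filter_upwards [hγ, not_frequently.1 hb] with n hγn hbn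
    rcases halt n with h | h | h
    exacts [absurd h hγn, absurd h hbn, by linarith [haγ n]]

theorem stmt11_general {d l p : ℕ} (A : Set (Euc d)) (h0 : Euc d → ℝ)
    (gI hI : Fin l → Euc d → ℝ) (gE hE : Fin p → Euc d → ℝ)
    (hAcl : IsClosed A)
    (hh0 : ConvexOn ℝ Set.univ h0)
    (hgI : ∀ i, ConvexOn ℝ Set.univ (gI i)) (hhI : ∀ i, ConvexOn ℝ Set.univ (hI i))
    (hgE : ∀ j, ConvexOn ℝ Set.univ (gE j)) (hhE : ∀ j, ConvexOn ℝ Set.univ (hE j))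
    (η1 : ℝ) (hη0 : 0 < η1)
    (x : ℕ → Euc d) (hxA : ∀ n, x n ∈ A)
    (V : (n : ℕ) → SubgradTuple h0 hI gE hE (x n))
    (xhat : ℕ → Euc d)
    (hxhat : ∀ n, ∀ z ∈ A, Gam gI (V n) (xhat n) ≤ Gam gI (V n) z)
    (halt : ∀ n, Gam gI (V n) (x (n + 1)) = 0 ∨
      Gam gI (V n) (xhat n) = phi gI hI gE hE (x n) ∨
      Gam gI (V n) (x (n + 1)) - phi gI hI gE hE (x n) ≤
        η1 * (Gam gI (V n) (xhat n) - phi gI hI gE hE (x n)))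
    (xs : Euc d) (hconv : Tendsto x atTop (𝓝 xs)) :
    Feasible A gI hI gE hE xs ∨
      (¬ Feasible A gI hI gE hE xs ∧ IsCriticalPen A h0 gI hI gE hE xs) := by
  have cont {F : Euc d → ℝ} (hF : ConvexOn ℝ Set.univ F) : Continuous F :=
    continuousOn_univ.1 (hF.continuousOn isOpen_univ)
  have chI (i : Fin l) := cont (hhI i)
  have cgE (j : Fin p) := cont (hgE j)
  have chE (j : Fin p) := cont (hhE j)
  have hxsA : xs ∈ A := hAcl.mem_of_tendsto hconv (Eventually.of_forall hxA)
  by_cases hfeas : Feasible A gI hI gE hE xs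
  · exact Or.inl hfeas
  have hphi_pos : 0 < phi gI hI gE hE xs := (phi_nonneg _ _ _ _ _).lt_of_ne fun h =>
    hfeas (feasible_of_phi_eq_zero hxsA h.symm)
  obtain ⟨ψ, hψ, hGamhat⟩ := exists_subseq_tendsto_of_alternatives hη0 hphi_pos
    (((continuous_phi (fun i => cont (hgI i)) chI cgE chE).tendsto xs).comp hconv)
    (fun n => (hxhat n (x n) (hxA n)).trans_eq (Gam_self gI (V n)))
    (fun n => phi_le_Gam gI (V n) _) halt
  have hxψ := hconv.comp hψ.tendsto_atTop
  obtain ⟨Vs, ρ, hρ, hvI, hvE, hwE⟩ :=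
    SubgradTuple.exists_subseq_tendsto (cont hh0) chI cgE chE hxψ fun k => V (ψ k)
  refine Or.inr ⟨hfeas, hxsA, Vs, fun z hz => ?_⟩
  rw [Gam_self]
  exact le_of_tendsto_of_tendsto' (hGamhat.comp hρ.tendsto_atTop)
    (tendsto_Gam gI chI cgE chE (hxψ.comp hρ.tendsto_atTop) _ Vs hvI hvE hwE z)
    fun k => hxhat _ z hz

theorem stmt11 {d l p : ℕ} (A : Set (Euc d)) (g0 h0 : Euc d → ℝ)
    (gI hI : Fin l → Euc d → ℝ) (gE hE : Fin p → Euc d → ℝ)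
    (hA : Convex ℝ A) (hAcl : IsClosed A) (hAne : A.Nonempty)
    (hg0 : ConvexOn ℝ Set.univ g0) (hh0 : ConvexOn ℝ Set.univ h0)
    (hgI : ∀ i, ConvexOn ℝ Set.univ (gI i)) (hhI : ∀ i, ConvexOn ℝ Set.univ (hI i))
    (hgE : ∀ j, ConvexOn ℝ Set.univ (gE j)) (hhE : ∀ j, ConvexOn ℝ Set.univ (hE j))
    (η1 : ℝ) (hη0 : 0 < η1) (hη1 : η1 < 1)
    (x : ℕ → Euc d) (hxA : ∀ n, x n ∈ A) (c : ℕ → ℝ) (hc : ∀ n, 0 < c n)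
    (V : (n : ℕ) → SubgradTuple h0 hI gE hE (x n))
    (hmin : ∀ n, ∀ z ∈ A,
      Qfun g0 gI (V n) (c (n + 1)) (x (n + 1)) ≤ Qfun g0 gI (V n) (c (n + 1)) z)
    (xhat : ℕ → Euc d) (hxhatA : ∀ n, xhat n ∈ A)
    (hxhat : ∀ n, ∀ z ∈ A, Gam gI (V n) (xhat n) ≤ Gam gI (V n) z)
    (halt : ∀ n, Gam gI (V n) (x (n + 1)) = 0 ∨
      Gam gI (V n) (xhat n) = phi gI hI gE hE (x n) ∨
      Gam gI (V n) (x (n + 1)) - phi gI hI gE hE (x n) ≤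
        η1 * (Gam gI (V n) (xhat n) - phi gI hI gE hE (x n)))
    (xs : Euc d) (hconv : Tendsto x atTop (𝓝 xs)) :
    Feasible A gI hI gE hE xs ∨
      (¬ Feasible A gI hI gE hE xs ∧ IsCriticalPen A h0 gI hI gE hE xs) :=
  stmt11_general A h0 gI hI gE hE hAcl hh0 hgI hhI hgE hhE η1 hη0 x hxA V xhat hxhat halt xs hconv
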